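/- Let F = F_q((T^{-1})) with Haar measure λ on F^{n−1} normalized so the closed unit ball has measure 1, and let U ⊆ F^{n−1} be a ball of the form U_1 × ⋯ × U_{n−1} with equal radii r(U). Let β = (β_1,…,β_{n−1}) ∈ F^{n−1} with |β_i| ≥ 1 for some i, and y ∈ F. Then for any m ∈ ℕ, λ({x ∈ U : |β_1 x_1 + ⋯ + β_{n−1} x_{n−1} + y| < q^{−m}}) ≤ r(U)^{n−2}/(‖β‖ q^m), where ‖β‖ = max_i |β_i|. -/

import Mathlib

open scoped Classical

/-- The element `T = X⁻¹` in `F_q((X)) = F_q((T⁻¹))`. -/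
noncomputable def Tvar (Fq : Type) [Field Fq] : LaurentSeries Fq := (HahnSeries.single (-1 : ℤ) 1)

/-- The absolute value `|a| = q ^ (deg_T a) = q ^ (- order a)` on `F = F_q((T⁻¹))`. -/
noncomputable def absv (Fq : Type) [Field Fq] [Fintype Fq] (a : LaurentSeries Fq) : ℝ :=
  if a = 0 then 0 else (Fintype.card Fq : ℝ) ^ (-(a.order))

open MeasureTheory
open scoped Multiplicative ENNReal
set_option linter.unusedSectionVars false
set_option maxHeartbeats 1000000
local notation "ℤₘ₀" => WithZero (Multiplicative ℤ)

namespace StripAux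

/-- shorthand for `ofAdd` elements of `ℤₘ₀` -/
def vz (j : ℤ) : ℤₘ₀ := ((Multiplicative.ofAdd j : Multiplicative ℤ) : ℤₘ₀)

lemma vz_le_vz {a b : ℤ} : vz a ≤ vz b ↔ a ≤ b := by
  simp [vz, WithZero.coe_le_coe]

lemma vz_mul (a b : ℤ) : vz a * vz b = vz (a + b) := by
  simp [vz, ← WithZero.coe_mul, ← ofAdd_add]

lemma vz_ne_zero (a : ℤ) : vz a ≠ 0 := WithZero.coe_ne_zero

variable (Fq : Type) [Field Fq] [Fintype Fq]

lemma hq1 : (1:ℝ) < (Fintype.card Fq : ℝ) := by exact_mod_cast Fintype.one_lt_card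

lemma absv_le_iff (x : LaurentSeries Fq) (k : ℤ) :
    absv Fq x ≤ (Fintype.card Fq : ℝ) ^ k ↔ Valued.v x ≤ vz k := by
  have hq := hq1 Fq
  have hv : Valued.v x ≤ vz k ↔ ∀ n : ℤ, n < -k → x.coeff n = 0 := by
    have := LaurentSeries.valuation_le_iff_coeff_lt_eq_zero Fq (D := -k) (f := x)
    rw [neg_neg] at this
    exact this
  rw [hv]
  unfold absv
  split_ifs with h
  · simp only [h, HahnSeries.coeff_zero, implies_true, iff_true]
    positivity
  · rw [zpow_le_zpow_iff_right₀ hq]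
    constructor
    · intro ho n hn
      exact HahnSeries.coeff_eq_zero_of_lt_order (by omega)
    · intro hc
      by_contra hlt
      exact (HahnSeries.coeff_order_eq_zero.not.2 h) (hc x.order (by omega))

lemma absv_lt_iff (x : LaurentSeries Fq) (k : ℤ) :
    absv Fq x < (Fintype.card Fq : ℝ) ^ k ↔ Valued.v x ≤ vz (k-1) := by
  rw [← absv_le_iff]
  have hq := hq1 Fq
  unfold absv
  split_ifs with h
  · constructor <;> intro <;> positivity
  · rw [zpow_lt_zpow_iff_right₀ hq, zpow_le_zpow_iff_right₀ hq]
    omega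

/-! ### Representatives -/

variable {Fq}

noncomputable def Rep (a b : ℤ) (g : ↥(Finset.Icc a b) → Fq) : LaurentSeries Fq :=
  ∑ p : ↥(Finset.Icc a b), HahnSeries.single (p : ℤ) (g p)

lemma Rep_coeff (a b : ℤ) (g : ↥(Finset.Icc a b) → Fq) (m : ℤ) :
    (Rep a b g).coeff m = if h : m ∈ Finset.Icc a b then g ⟨m, h⟩ else 0 := by
  have : (Rep a b g).coeff m
      = ∑ p : ↥(Finset.Icc a b), (HahnSeries.single (p : ℤ) (g p)).coeff m :=
    map_sum (HahnSeries.coeff.addMonoidHom m) _ _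
  rw [this]
  simp only [HahnSeries.coeff_single]
  split_ifs with h
  · rw [Fintype.sum_eq_single (⟨m, h⟩ : ↥(Finset.Icc a b))]
    · simp
    · intro p hp
      rw [if_neg]
      intro hmp
      exact hp (by ext; simp [hmp])
  · apply Finset.sum_eq_zero
    intro p _
    rw [if_neg]
    intro hmp
    exact h (by rw [hmp]; exact p.2)

lemma v_Rep_le (a b : ℤ) (g : ↥(Finset.Icc a b) → Fq) :
    Valued.v (Rep a b g) ≤ vz (-a) := by
  rw [show vz (-a) = WithZero.exp (-a) from rfl,
    LaurentSeries.valuation_le_iff_coeff_lt_eq_zero]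
  intro n hn
  rw [Rep_coeff, dif_neg]
  simp only [Finset.mem_Icc]
  omega

lemma Rep_inj (a b : ℤ) (g g' : ↥(Finset.Icc a b) → Fq)
    (h : Valued.v (Rep a b g - Rep a b g') ≤ vz (-(b+1))) : g = g' := by
  rw [show vz (-(b+1)) = WithZero.exp (-(b+1)) from rfl,
    LaurentSeries.valuation_le_iff_coeff_lt_eq_zero] at h
  funext p
  have hp := p.2
  simp only [Finset.mem_Icc] at hp
  have := h (p : ℤ) (by omega)
  rw [HahnSeries.coeff_sub, Rep_coeff, Rep_coeff, dif_pos p.2, dif_pos p.2] at this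
  have : g ⟨↑p, p.2⟩ = g' ⟨↑p, p.2⟩ := by linear_combination (norm := module) this
  simpa using this

lemma v_sub_Rep (σ τ : ℤ) (x : LaurentSeries Fq) (hx : Valued.v x ≤ vz τ) :
    Valued.v (x - Rep (-τ) (-σ-1) (fun p => x.coeff (p : ℤ))) ≤ vz σ := by
  rw [show vz σ = WithZero.exp (-(-σ)) by rw [neg_neg]; rfl,
    LaurentSeries.valuation_le_iff_coeff_lt_eq_zero]
  intro n hn
  rw [HahnSeries.coeff_sub, Rep_coeff]
  split_ifs with h
  · simp
  · simp only [Finset.mem_Icc] at h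
    have hn' : n < -τ := by omega
    have hx0 : x.coeff n = 0 := by
      rw [show vz τ = WithZero.exp (-(-τ)) by rw [neg_neg]; rfl,
        LaurentSeries.valuation_le_iff_coeff_lt_eq_zero] at hx
      exact hx n hn'
    simp [hx0]


variable {ι : Type} [Fintype ι]

def TBox (t : ι → LaurentSeries Fq) (j : ℤ) : Set (ι → LaurentSeries Fq) :=
  {x | ∀ i, Valued.v (x i - t i) ≤ vz j}

lemma isOpen_oball (a : LaurentSeries Fq) (j : ℤ) :
    IsOpen {u : LaurentSeries Fq | Valued.v (u - a) ≤ vz j} := by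
  rw [isOpen_iff_mem_nhds]
  intro u hu
  rw [Valued.mem_nhds]
  have hw : Valued.v (HahnSeries.single (-j) (1:Fq) : LaurentSeries Fq) = vz j := by
    rw [LaurentSeries.valuation_single_zpow, neg_neg]; rfl
  have hw0 : (Valued.v : Valuation (LaurentSeries Fq) ℤₘ₀).restrict
      (HahnSeries.single (-j) (1:Fq) : LaurentSeries Fq) ≠ 0 := by
    apply ne_of_gt; rw [Valuation.restrict_pos_iff, hw]; exact zero_lt_iff.mpr (vz_ne_zero j)
  refine ⟨Units.mk0 _ hw0, fun z hz => ?_⟩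
  simp only [Set.mem_setOf_eq] at *
  replace hz : Valued.v (z - u) < vz j := by rw [← hw]; exact (Valuation.restrict_lt_iff _).mp hz
  have : z - a = (z - u) + (u - a) := by ring
  rw [this]
  exact le_trans (Valuation.map_add _ _ _) (max_le (le_of_lt hz) hu)

lemma isOpen_TBox (t : ι → LaurentSeries Fq) (j : ℤ) : IsOpen (TBox t j) := by
  have : TBox t j = ⋂ i, (fun x : ι → LaurentSeries Fq => x i) ⁻¹'
      {u | Valued.v (u - t i) ≤ vz j} := by
    ext x; simp [TBox]
  rw [this]
  exact isOpen_iInter_of_finite fun i => (isOpen_oball _ _).preimage (continuous_apply i)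

variable [MeasurableSpace (ι → LaurentSeries Fq)] [BorelSpace (ι → LaurentSeries Fq)]
  (μ : Measure (ι → LaurentSeries Fq)) [μ.IsAddHaarMeasure]

lemma measurableSet_TBox (t : ι → LaurentSeries Fq) (j : ℤ) : MeasurableSet (TBox t j) :=
  (isOpen_TBox t j).measurableSet

lemma μ_TBox_eq (t t' : ι → LaurentSeries Fq) (j : ℤ) : μ (TBox t j) = μ (TBox t' j) := by
  have h : TBox t j = (fun x => (t' - t) + x) ⁻¹' (TBox t' j) := by
    ext x
    simp only [TBox, Set.mem_preimage, Set.mem_setOf_eq, Pi.add_apply, Pi.sub_apply]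
    refine forall_congr' fun i => ?_
    rw [show t' i - t i + x i - t' i = x i - t i from by ring]
  rw [h, measure_preimage_add]

lemma TBox_subset_iUnion (t : ι → LaurentSeries Fq) (σ τ : ℤ) :
    TBox t τ ⊆ ⋃ g : ι → (↥(Finset.Icc (-τ) (-σ-1)) → Fq),
      TBox (fun i => t i + Rep (-τ) (-σ-1) (g i)) σ := by
  intro x hx
  refine Set.mem_iUnion.2 ⟨fun i p => (x i - t i).coeff (p : ℤ), fun i => ?_⟩
  have := v_sub_Rep σ τ (x i - t i) (hx i)
  rw [show x i - (t i + Rep (-τ) (-σ-1) fun p => (x i - t i).coeff (p : ℤ))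
    = (x i - t i) - Rep (-τ) (-σ-1) (fun p => (x i - t i).coeff (p : ℤ)) from by ring]
  exact this

lemma rep_eq_of_mem_TBox {t : ι → LaurentSeries Fq} {σ τ : ℤ}
    {g g' : ι → (↥(Finset.Icc (-τ) (-σ-1)) → Fq)} {x : ι → LaurentSeries Fq}
    (hx : x ∈ TBox (fun i => t i + Rep (-τ) (-σ-1) (g i)) σ)
    (hx' : x ∈ TBox (fun i => t i + Rep (-τ) (-σ-1) (g' i)) σ) : g = g' := by
  funext i
  apply Rep_inj (-τ) (-σ-1)
  rw [show (-(-σ-1+1)) = σ from by ring]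
  have h1 := hx i
  have h2 := hx' i
  rw [show Rep (-τ) (-σ-1) (g i) - Rep (-τ) (-σ-1) (g' i)
    = (x i - (t i + Rep (-τ) (-σ-1) (g' i))) - (x i - (t i + Rep (-τ) (-σ-1) (g i))) from by ring]
  exact le_trans (Valuation.map_sub _ _ _) (max_le h2 h1)

lemma TBox_mono {t : ι → LaurentSeries Fq} {j j' : ℤ} (h : j ≤ j') : TBox t j ⊆ TBox t j' := by
  intro x hx i
  exact le_trans (hx i) (by simpa [vz, WithZero.coe_le_coe] using h)

lemma μ_TBox_le (hμ : μ (TBox (0 : ι → LaurentSeries Fq) 0) = 1)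
    (t : ι → LaurentSeries Fq) (j : ℤ) (hj : j ≤ 0) :
    μ (TBox t j) ≤ (Fintype.card Fq : ℝ≥0∞) ^ (j * Fintype.card ι) := by
  classical
  have hsub : ∀ g : ι → (↥(Finset.Icc (-(0:ℤ)) (-j-1)) → Fq), TBox (fun i => 0 + Rep (-(0:ℤ)) (-j-1) (g i)) j ⊆ TBox 0 0 := by
    intro g x hx i
    have h1 := hx i
    have h2 := v_Rep_le (-(0:ℤ)) (-j-1) (g i)
    rw [show x i - (0 : ι → LaurentSeries Fq) i
      = (x i - (0 + Rep (-(0:ℤ)) (-j-1) (g i))) + Rep (-(0:ℤ)) (-j-1) (g i) from by simp] 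
    refine le_trans (Valuation.map_add _ _ _) (max_le (le_trans h1 ?_) (by simpa using h2))
    exact vz_le_vz.mpr hj
  have hdisj : Pairwise (Function.onFun Disjoint
      (fun g : ι → (↥(Finset.Icc (-(0:ℤ)) (-j-1)) → Fq) => TBox (fun i => 0 + Rep (-(0:ℤ)) (-j-1) (g i)) j)) := by
    intro g g' hne
    rw [Function.onFun, Set.disjoint_left]
    intro x hx hx'
    exact hne (rep_eq_of_mem_TBox hx hx')
  have hsum : ∑' g : ι → (↥(Finset.Icc (-(0:ℤ)) (-j-1)) → Fq), μ (TBox (fun i => 0 + Rep (-(0:ℤ)) (-j-1) (g i)) j)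
      = μ (⋃ g : ι → (↥(Finset.Icc (-(0:ℤ)) (-j-1)) → Fq), TBox (fun i => 0 + Rep (-(0:ℤ)) (-j-1) (g i)) j) :=
    (measure_iUnion hdisj fun g => measurableSet_TBox _ _).symm
  have hle1 : (Fintype.card (ι → (↥(Finset.Icc (-(0:ℤ)) (-j-1)) → Fq)) : ℝ≥0∞) * μ (TBox t j) ≤ 1 := by
    have : ∀ g : ι → (↥(Finset.Icc (-(0:ℤ)) (-j-1)) → Fq), μ (TBox (fun i => 0 + Rep (-(0:ℤ)) (-j-1) (g i)) j) = μ (TBox t j) :=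
      fun g => μ_TBox_eq μ _ _ _
    calc (Fintype.card (ι → (↥(Finset.Icc (-(0:ℤ)) (-j-1)) → Fq)) : ℝ≥0∞) * μ (TBox t j)
        = ∑' g : ι → (↥(Finset.Icc (-(0:ℤ)) (-j-1)) → Fq), μ (TBox (fun i => 0 + Rep (-(0:ℤ)) (-j-1) (g i)) j) := by
          rw [tsum_congr this, tsum_fintype, Finset.sum_const, nsmul_eq_mul, Finset.card_univ]
      _ = μ (⋃ g : ι → (↥(Finset.Icc (-(0:ℤ)) (-j-1)) → Fq), TBox (fun i => 0 + Rep (-(0:ℤ)) (-j-1) (g i)) j) := hsum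
      _ ≤ μ (TBox 0 0) := measure_mono (Set.iUnion_subset hsub)
      _ = 1 := hμ
  have hcard : (Fintype.card (ι → (↥(Finset.Icc (-(0:ℤ)) (-j-1)) → Fq)) : ℝ≥0∞)
      = (Fintype.card Fq : ℝ≥0∞) ^ (((-j).toNat * Fintype.card ι : ℕ)) := by
    rw [Fintype.card_fun, Fintype.card_fun, Fintype.card_coe, Int.card_Icc]
    push_cast
    rw [← pow_mul]
    congr 2
    omega
  have hq0 : (Fintype.card Fq : ℝ≥0∞) ≠ 0 := by
    simp [Fintype.card_ne_zero]
  have hqt : (Fintype.card Fq : ℝ≥0∞) ≠ ⊤ := by simp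
  have hzpow : (Fintype.card Fq : ℝ≥0∞) ^ (j * Fintype.card ι)
      = ((Fintype.card Fq : ℝ≥0∞) ^ (((-j).toNat * Fintype.card ι : ℕ)))⁻¹ := by
    rw [← zpow_natCast ((Fintype.card Fq : ℝ≥0∞)), ← ENNReal.zpow_neg]
    congr 1
    have : ((((-j).toNat * Fintype.card ι : ℕ)) : ℤ) = (-j) * Fintype.card ι := by
      push_cast [Int.toNat_of_nonneg (by omega : (0:ℤ) ≤ -j)]
      ring
    rw [this]
    ring
  rw [hzpow, ← hcard, ENNReal.le_inv_iff_mul_le, mul_comm]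
  exact hle1


lemma ofReal_q_zpow (Fq : Type) [Field Fq] [Fintype Fq] (e : ℤ) :
    ENNReal.ofReal ((Fintype.card Fq : ℝ) ^ e) = (Fintype.card Fq : ℝ≥0∞) ^ e := by
  have hq0 : (0:ℝ) < (Fintype.card Fq : ℝ) := by
    have := hq1 Fq; linarith
  rcases e with n | n
  · rw [Int.ofNat_eq_coe, zpow_natCast, zpow_natCast, ENNReal.ofReal_pow hq0.le,
      ENNReal.ofReal_natCast]
  · rw [zpow_negSucc, zpow_negSucc, ENNReal.ofReal_inv_of_pos (by positivity),
      ENNReal.ofReal_pow hq0.le, ENNReal.ofReal_natCast]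

end StripAux

open StripAux in
/-- measure of a strip `{x ∈ U : |β·x + y| < q^{-m}}` in a product ball `U`. -/
theorem measure_strip_le (Fq : Type) [Field Fq] [Fintype Fq]
    (n : ℕ) (hn : 2 ≤ n)
    [MeasurableSpace (Fin (n - 1) → LaurentSeries Fq)]
    [BorelSpace (Fin (n - 1) → LaurentSeries Fq)]
    (μ : Measure (Fin (n - 1) → LaurentSeries Fq)) [μ.IsAddHaarMeasure]
    (hμ : μ {x : Fin (n - 1) → LaurentSeries Fq | ∀ i, absv Fq (x i) ≤ 1} = 1)
    (c : Fin (n - 1) → LaurentSeries Fq) (r : ℝ) (hr : ∃ k : ℤ, r = (Fintype.card Fq : ℝ) ^ k)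
    (β : Fin (n - 1) → LaurentSeries Fq) (i₀ : Fin (n - 1)) (hβ : 1 ≤ absv Fq (β i₀))
    (y : LaurentSeries Fq) (m : ℕ) :
    μ {x : Fin (n - 1) → LaurentSeries Fq |
        (∀ i, absv Fq (x i - c i) ≤ r) ∧
        absv Fq (∑ i, β i * x i + y) < ((Fintype.card Fq : ℝ) ^ m)⁻¹} ≤
      ENNReal.ofReal (r ^ (n - 2) /
        ((⨆ i, absv Fq (β i)) * (Fintype.card Fq : ℝ) ^ m)) := by
  obtain ⟨k, rfl⟩ : ∃ k, n = k + 2 := ⟨n - 2, by omega⟩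
  have hq := hq1 Fq
  have hqR0 : (0:ℝ) < (Fintype.card Fq : ℝ) := by linarith
  have hq0 : (Fintype.card Fq : ℝ≥0∞) ≠ 0 := by simp [Fintype.card_ne_zero]
  have hqt : (Fintype.card Fq : ℝ≥0∞) ≠ ⊤ := by simp
  have hQ1 : (1:ℝ≥0∞) ≤ (Fintype.card Fq : ℝ≥0∞) := by
    rw [show (1:ℝ≥0∞) = ((1:ℕ):ℝ≥0∞) from by simp]
    exact_mod_cast Nat.one_le_iff_ne_zero.mpr Fintype.card_ne_zero
  obtain ⟨ρ, rfl⟩ := hr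
  have hne : Nonempty (Fin (k + 2 - 1)) := ⟨i₀⟩
  obtain ⟨istar, hmax⟩ := Finite.exists_max (fun i => absv Fq (β i))
  have hsup : (⨆ i, absv Fq (β i)) = absv Fq (β istar) :=
    le_antisymm (ciSup_le hmax) (le_ciSup (f := fun i => absv Fq (β i)) (Set.Finite.bddAbove (Set.finite_range _)) istar)
  have hβs : 1 ≤ absv Fq (β istar) := le_trans hβ (hmax i₀)
  have hβ0 : β istar ≠ 0 := by
    intro h
    rw [h] at hβs
    unfold absv at hβs
    rw [if_pos rfl] at hβs
    linarith
  set d : ℤ := -((β istar).order) with hd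
  have habs : absv Fq (β istar) = (Fintype.card Fq : ℝ) ^ d := by
    unfold absv; rw [if_neg hβ0]
  have hd0 : 0 ≤ d := by
    rw [habs, show (1:ℝ) = (Fintype.card Fq : ℝ) ^ (0:ℤ) from (zpow_zero _).symm] at hβs
    exact (zpow_le_zpow_iff_right₀ hq).mp hβs
  have hvβ : Valued.v (β istar) = vz d := by
    have h1 : Valued.v (β istar) ≤ vz d := (absv_le_iff Fq _ d).mp habs.le
    have h2 : ¬ Valued.v (β istar) ≤ vz (d-1) := by
      rw [← absv_le_iff, habs, zpow_le_zpow_iff_right₀ hq]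
      omega
    have hvne : (Valued.v (β istar) : ℤₘ₀) ≠ (0 : ℤₘ₀) := (Valuation.ne_zero_iff _).mpr hβ0
    obtain ⟨u, hu⟩ := WithZero.ne_zero_iff_exists.mp hvne
    rw [← hu] at h1 h2 ⊢
    have e1 : Multiplicative.toAdd u ≤ d := by
      rw [show vz d = ((Multiplicative.ofAdd d : Multiplicative ℤ) : ℤₘ₀) from rfl,
        WithZero.coe_le_coe, ← ofAdd_toAdd u, Multiplicative.ofAdd_le] at h1
      exact h1
    have e2 : ¬ Multiplicative.toAdd u ≤ d - 1 := by
      intro hcon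
      exact h2 (by
        rw [show vz (d-1) = ((Multiplicative.ofAdd (d-1) : Multiplicative ℤ) : ℤₘ₀) from rfl,
          WithZero.coe_le_coe, ← ofAdd_toAdd u, Multiplicative.ofAdd_le]
        exact hcon)
    have : Multiplicative.toAdd u = d := by omega
    rw [vz, ← this, ofAdd_toAdd]
  have hvβi : ∀ i, Valued.v (β i) ≤ vz d := by
    intro i
    exact (absv_le_iff Fq _ d).mp (by rw [← habs]; exact hmax i)
  set σ : ℤ := -(m:ℤ) - 1 - d with hσ
  have hσ0 : σ ≤ -1 := by omega
  -- the strip set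
  set S := {x : Fin (k + 2 - 1) → LaurentSeries Fq |
      (∀ i, absv Fq (x i - c i) ≤ (Fintype.card Fq : ℝ) ^ ρ) ∧
      absv Fq (∑ i, β i * x i + y) < ((Fintype.card Fq : ℝ) ^ m)⁻¹} with hS
  have hSbox : S ⊆ TBox c ρ := by
    intro x hx i
    exact (absv_le_iff Fq _ ρ).mp (hx.1 i)
  have hstrip : ∀ x ∈ S, Valued.v (∑ i, β i * x i + y) ≤ vz (-(m:ℤ) - 1) := by
    intro x hx
    have := hx.2
    rw [show ((Fintype.card Fq : ℝ) ^ m)⁻¹ = (Fintype.card Fq : ℝ) ^ (-(m:ℤ)) from by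
      rw [zpow_neg, zpow_natCast], absv_lt_iff] at this
    rwa [show -(m:ℤ) - 1 = -(m:ℤ) - 1 from rfl]
  -- unit box measure
  have hμ' : μ (TBox (0 : Fin (k + 2 - 1) → LaurentSeries Fq) 0) = 1 := by
    rw [← hμ]
    congr 1
    ext x
    simp only [TBox, Set.mem_setOf_eq, Pi.zero_apply, sub_zero]
    refine forall_congr' fun i => ?_
    rw [← absv_le_iff, zpow_zero]
  have hcf : Fintype.card (Fin (k + 2 - 1)) = k + 1 := by simp
  -- rewrite the RHS as a power of Q
  rw [hsup, habs]
  have hRHS : ENNReal.ofReal (((Fintype.card Fq : ℝ) ^ ρ) ^ (k + 2 - 2) /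
      ((Fintype.card Fq : ℝ) ^ d * (Fintype.card Fq : ℝ) ^ m))
      = (Fintype.card Fq : ℝ≥0∞) ^ (ρ * (k:ℤ) - d - m) := by
    rw [show ((Fintype.card Fq : ℝ) ^ ρ) ^ (k + 2 - 2) = (Fintype.card Fq : ℝ) ^ (ρ * (k:ℤ)) from by
        rw [← zpow_natCast ((Fintype.card Fq : ℝ) ^ ρ) (k + 2 - 2), ← zpow_mul]
        norm_num,
      show (Fintype.card Fq : ℝ) ^ m = (Fintype.card Fq : ℝ) ^ (m:ℤ) from (zpow_natCast _ m).symm,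
      ← zpow_add₀ (ne_of_gt hqR0), ← zpow_sub₀ (ne_of_gt hqR0), ofReal_q_zpow]
    congr 1
    ring
  rw [hRHS]
  rcases le_or_gt ρ σ with hA | hB
  · -- Case A : the whole box is small
    calc μ S ≤ μ (TBox c ρ) := measure_mono hSbox
      _ ≤ (Fintype.card Fq : ℝ≥0∞) ^ (ρ * Fintype.card (Fin (k + 2 - 1))) :=
          μ_TBox_le μ hμ' c ρ (by omega)
      _ ≤ (Fintype.card Fq : ℝ≥0∞) ^ (ρ * (k:ℤ) - d - m) := by
          rw [hcf]
          apply ENNReal.zpow_le_of_le hQ1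
          have : ρ * ((k:ℤ) + 1) = ρ * (k:ℤ) + ρ := by ring
          push_cast
          omega
  · -- Case B : covering by small boxes
    classical
    set Φ : Finset (Fin (k + 2 - 1) → (↥(Finset.Icc (-ρ) (-σ-1)) → Fq)) :=
      Finset.univ.filter (fun g =>
        Valued.v (∑ i, β i * (c i + Rep (-ρ) (-σ-1) (g i)) + y) ≤ vz (-(m:ℤ) - 1)) with hΦdef
    have hcover : S ⊆ ⋃ g ∈ Φ, TBox (fun i => c i + Rep (-ρ) (-σ-1) (g i)) σ := by
      intro x hx
      obtain ⟨g, hg⟩ := Set.mem_iUnion.mp (TBox_subset_iUnion c σ ρ (hSbox hx))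
      refine Set.mem_biUnion ?_ hg
      refine Finset.mem_filter.mpr ⟨Finset.mem_univ _, ?_⟩
      have hsumeq : ∑ i, β i * (c i + Rep (-ρ) (-σ-1) (g i)) + y
          = (∑ i, β i * x i + y) - ∑ i, (β i * x i - β i * (c i + Rep (-ρ) (-σ-1) (g i))) := by
        rw [Finset.sum_sub_distrib]
        ring
      rw [hsumeq]
      refine le_trans (Valuation.map_sub _ _ _) (max_le (hstrip x hx) ?_)
      apply Valuation.map_sum_le
      intro i _
      rw [show β i * x i - β i * (c i + Rep (-ρ) (-σ-1) (g i))
        = β i * (x i - (c i + Rep (-ρ) (-σ-1) (g i))) from by ring, Valuation.map_mul]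
      calc Valued.v (β i) * Valued.v (x i - (c i + Rep (-ρ) (-σ-1) (g i)))
          ≤ vz d * vz σ := mul_le_mul' (hvβi i) (hg i)
        _ = vz (-(m:ℤ) - 1) := by rw [vz_mul]; congr 1; omega
    have hμS : μ S ≤ Φ.card • ((Fintype.card Fq : ℝ≥0∞) ^ (σ * ((k:ℤ) + 1))) := by
      calc μ S ≤ μ (⋃ g ∈ Φ, TBox (fun i => c i + Rep (-ρ) (-σ-1) (g i)) σ) :=
            measure_mono hcover
        _ ≤ ∑ g ∈ Φ, μ (TBox (fun i => c i + Rep (-ρ) (-σ-1) (g i)) σ) :=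
            measure_biUnion_finset_le Φ _
        _ ≤ ∑ _g ∈ Φ, (Fintype.card Fq : ℝ≥0∞) ^ (σ * ((k:ℤ) + 1)) := by
            apply Finset.sum_le_sum
            intro g _
            have := μ_TBox_le μ hμ' (fun i => c i + Rep (-ρ) (-σ-1) (g i)) σ (by omega)
            rwa [hcf] at this
        _ = Φ.card • ((Fintype.card Fq : ℝ≥0∞) ^ (σ * ((k:ℤ) + 1))) := Finset.sum_const _
    -- cardinality bound on Φ
    have hinj : Φ.card ≤ Fintype.card
        ({i : Fin (k + 2 - 1) // i ≠ istar} → (↥(Finset.Icc (-ρ) (-σ-1)) → Fq)) := by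
      rw [← Finset.card_univ]
      apply Finset.card_le_card_of_injOn
        (fun g (p : {i : Fin (k + 2 - 1) // i ≠ istar}) => g ↑p) (fun _ _ => Finset.mem_univ _)
      intro g hgΦ g' hg'Φ hres
      rw [Finset.mem_coe, hΦdef, Finset.mem_filter] at hgΦ hg'Φ
      funext i
      by_cases hi : i = istar
      case neg => exact congrFun hres ⟨i, hi⟩
      subst hi
      have hdiff : (∑ j, β j * (c j + Rep (-ρ) (-σ-1) (g j)) + y)
          - (∑ j, β j * (c j + Rep (-ρ) (-σ-1) (g' j)) + y)
          = β i * (Rep (-ρ) (-σ-1) (g i) - Rep (-ρ) (-σ-1) (g' i)) := by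
        rw [show (∑ j, β j * (c j + Rep (-ρ) (-σ-1) (g j)) + y)
            - (∑ j, β j * (c j + Rep (-ρ) (-σ-1) (g' j)) + y)
            = ∑ j, (β j * (c j + Rep (-ρ) (-σ-1) (g j))
              - β j * (c j + Rep (-ρ) (-σ-1) (g' j))) from by rw [Finset.sum_sub_distrib]; ring]
        rw [Finset.sum_eq_single i]
        · ring
        · intro j _ hj
          have : g j = g' j := congrFun hres ⟨j, hj⟩
          rw [this]
          ring
        · intro h
          exact absurd (Finset.mem_univ i) h
      have hv : Valued.v (β i * (Rep (-ρ) (-σ-1) (g i) - Rep (-ρ) (-σ-1) (g' i)))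
          ≤ vz (-(m:ℤ) - 1) := by
        rw [← hdiff]
        exact le_trans (Valuation.map_sub _ _ _) (max_le hgΦ.2 hg'Φ.2)
      rw [Valuation.map_mul, hvβ] at hv
      have hone : vz (-d) * vz d = 1 := by
        rw [vz_mul, neg_add_cancel]
        rfl
      have hv2 : Valued.v (Rep (-ρ) (-σ-1) (g i) - Rep (-ρ) (-σ-1) (g' i)) ≤ vz σ := by
        calc Valued.v (Rep (-ρ) (-σ-1) (g i) - Rep (-ρ) (-σ-1) (g' i))
            = vz (-d) * (vz d * Valued.v (Rep (-ρ) (-σ-1) (g i) - Rep (-ρ) (-σ-1) (g' i))) := by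
              rw [← mul_assoc, hone, one_mul]
          _ ≤ vz (-d) * vz (-(m:ℤ) - 1) := mul_le_mul_right hv _
          _ = vz σ := by rw [vz_mul]; congr 1; omega
      exact Rep_inj _ _ _ _ (by rwa [show -((-σ-1)+1) = σ from by ring])
    have hsubcard : Fintype.card {i : Fin (k + 2 - 1) // i ≠ istar} = k := by
      have := Fintype.card_subtype_compl (fun i : Fin (k + 2 - 1) => i = istar)
      rw [Fintype.card_subtype_eq] at this
      simpa using this
    have hcards : Fintype.card
        ({i : Fin (k + 2 - 1) // i ≠ istar} → (↥(Finset.Icc (-ρ) (-σ-1)) → Fq))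
        = (Fintype.card Fq) ^ ((ρ - σ).toNat * k) := by
      rw [Fintype.card_fun, Fintype.card_fun, Fintype.card_coe, Int.card_Icc, hsubcard,
        ← pow_mul]
      congr 2
      omega
    have hΦcast : (Φ.card : ℝ≥0∞) ≤ (Fintype.card Fq : ℝ≥0∞) ^ ((ρ - σ) * (k:ℤ)) := by
      calc (Φ.card : ℝ≥0∞) ≤ ((Fintype.card Fq ^ ((ρ - σ).toNat * k) : ℕ) : ℝ≥0∞) := by
            exact_mod_cast le_trans hinj (le_of_eq hcards)
        _ = (Fintype.card Fq : ℝ≥0∞) ^ (((ρ - σ).toNat * k : ℕ)) := by push_cast; ring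
        _ = (Fintype.card Fq : ℝ≥0∞) ^ ((ρ - σ) * (k:ℤ)) := by
            rw [← zpow_natCast ((Fintype.card Fq : ℝ≥0∞))]
            congr 1
            push_cast [Int.toNat_of_nonneg (by omega : (0:ℤ) ≤ ρ - σ)]
            ring
    calc μ S ≤ Φ.card • ((Fintype.card Fq : ℝ≥0∞) ^ (σ * ((k:ℤ) + 1))) := hμS
      _ = (Φ.card : ℝ≥0∞) * (Fintype.card Fq : ℝ≥0∞) ^ (σ * ((k:ℤ) + 1)) := nsmul_eq_mul _ _
      _ ≤ (Fintype.card Fq : ℝ≥0∞) ^ ((ρ - σ) * (k:ℤ))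
            * (Fintype.card Fq : ℝ≥0∞) ^ (σ * ((k:ℤ) + 1)) := mul_le_mul_left hΦcast _
      _ = (Fintype.card Fq : ℝ≥0∞) ^ ((ρ - σ) * (k:ℤ) + σ * ((k:ℤ) + 1)) :=
            (ENNReal.zpow_add hq0 hqt _ _).symm
      _ ≤ (Fintype.card Fq : ℝ≥0∞) ^ (ρ * (k:ℤ) - d - m) := by
            apply ENNReal.zpow_le_of_le hQ1
            have : (ρ - σ) * (k:ℤ) + σ * ((k:ℤ) + 1) = ρ * (k:ℤ) + σ := by ring
            omega
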